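/- arXiv:1708.02107 — 2 statements merged into one kernel-verified Lean document; each statement's English description precedes it below -/
import Mathlib

section
/- Let R ≥ 1 and assume ‖Σ_{r=1}^R φ_r²‖_∞ < ∞ and max_{1≤r≤R} ‖φ_r²‖_∞ < ∞. Then for every α ∈ (0,1), with probability at least 1 − α: (1/n²) Σ_{i=1}^n W_R(X_i,X_i)² ≤ ( 1 + max_{1≤r≤R} ‖φ_r²‖_∞ √(log(R/α)/(2n)) ) · (2ρ(R) ‖W_R‖²)/n, where ‖W_R‖² := Σ_{r=1}^R (λ*_r)². -/
/-!
By Cauchy–Schwarz, `W_R(x,x)² ≤ (Σ_r φ_r(x)²) · Σ_r λ_r² φ_r(x)² ≤ (ρ + 1) Σ_r λ_r² φ_r(x)²`, so the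
diagonal sum is at most `(ρ + 1) Σ_r λ_r² Σ_i φ_r(X_i)²`. For each `r < R` the inner sum is a sum of
`n` independent variables with values in `[0, a]` and mean `1`, so by Hoeffding's inequality it
exceeds `n (1 + t)` with probability at most `exp (-2 n t² / a²) = α / R` for
`t = a √(log (R/α) / (2n))`. A union bound over `r` and `ρ + 1 ≤ 2ρ` conclude.
-/

open MeasureTheory ProbabilityTheory Filter

noncomputable section

/-- The rank-`R` truncation `W_R(x,y) = Σ_{r=1}^R λ_r φ_r(x) φ_r(y)` (the first `R`
eigenfunctions being indexed by `0, …, R−1`). -/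
def Wapprox {S : Type*} (φ : ℕ → S → ℝ) (lam : ℕ → ℝ) (R : ℕ) (x y : S) : ℝ :=
  ∑ r ∈ Finset.range R, lam r * φ r x * φ r y

open Finset Real

lemma measureReal_sum_ge_le_of_mem_Icc {Ω ι : Type*} [MeasurableSpace Ω] {μ : Measure Ω}
    [IsProbabilityMeasure μ] [Fintype ι] {Y : ι → Ω → ℝ} (hindep : iIndepFun Y μ)
    (hmeas : ∀ i, Measurable (Y i)) {lo hi m : ℝ} (hY : ∀ i, ∀ᵐ ω ∂μ, Y i ω ∈ Set.Icc lo hi)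
    (hm : ∀ i, μ[Y i] = m) {t : ℝ} (ht : 0 ≤ t) :
    μ.real {ω | Fintype.card ι * (m + t) ≤ ∑ i, Y i ω}
      ≤ exp (-(2 * Fintype.card ι * t ^ 2 / (hi - lo) ^ 2)) := by
  have hcentred : iIndepFun (fun i ω => Y i ω - μ[Y i]) μ :=
    hindep.comp _ fun _ => measurable_id.sub_const _
  have hsub := HasSubgaussianMGF.measure_sum_ge_le_of_iIndepFun hcentred (s := univ)
    (fun i _ => hasSubgaussianMGF_of_mem_Icc (hmeas i).aemeasurable (hY i))
    (mul_nonneg (Nat.cast_nonneg (Fintype.card ι)) ht)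
  convert hsub using 2
  · ext ω
    simp only [hm, sum_sub_distrib, sum_const, card_univ, nsmul_eq_mul, Set.mem_ofPred_eq]
    constructor <;> intro h <;> linarith
  · simp only [sum_const, card_univ, nsmul_eq_mul, NNReal.coe_mul, NNReal.coe_natCast,
      NNReal.coe_pow, NNReal.coe_div, coe_nnnorm, Real.norm_eq_abs, NNReal.coe_ofNat, div_pow, sq_abs]
    rcases eq_or_ne (Fintype.card ι : ℝ) 0 with h | h
    · simp [h]
    rcases eq_or_ne (hi - lo) 0 with h' | h'
    · simp [h']
    field_simp

lemma one_le_of_integral_sq_eq_one {S : Type*} [MeasurableSpace S] {σ : Measure S}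
    [IsProbabilityMeasure σ] {f : S → ℝ} {a : ℝ} (hf : ∫ x, f x ^ 2 ∂σ = 1)
    (ha : ∀ x, f x ^ 2 ≤ a) : 1 ≤ a := by
  have hint : Integrable (fun x => f x ^ 2) σ := .of_integral_ne_zero (by simp [hf])
  calc 1 = ∫ x, f x ^ 2 ∂σ := hf.symm
    _ ≤ ∫ _, a ∂σ := integral_mono hint (integrable_const a) ha
    _ = a := by simp

lemma ofReal_one_sub_card_mul_le_measure {Ω ι : Type*} [MeasurableSpace Ω] {μ : Measure Ω}
    [IsProbabilityMeasure μ] {s : Finset ι} {B : ι → Set Ω} {A : Set Ω} {δ : ℝ} (hδ : 0 ≤ δ)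
    (hB : ∀ i ∈ s, μ (B i) ≤ ENNReal.ofReal δ) (hA : ∀ ω, (∀ i ∈ s, ω ∉ B i) → ω ∈ A) :
    ENNReal.ofReal (1 - #s * δ) ≤ μ A := by
  set U := ⋃ i ∈ s, B i
  have hU : μ U ≤ ENNReal.ofReal (#s * δ) := calc
    μ U ≤ ∑ i ∈ s, μ (B i) := measure_biUnion_finset_le s B
    _ ≤ ∑ _i ∈ s, ENNReal.ofReal δ := sum_le_sum hB
    _ = ENNReal.ofReal (#s * δ) := by
      rw [sum_const, nsmul_eq_mul, ENNReal.ofReal_mul (Nat.cast_nonneg _), ENNReal.ofReal_natCast]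
  have hUA : Uᶜ ⊆ A := fun ω hω => hA ω fun i hi hωi => hω (Set.mem_biUnion hi hωi)
  rw [ENNReal.ofReal_sub _ (by positivity), ENNReal.ofReal_one, tsub_le_iff_right]
  calc 1 = μ (U ∪ Uᶜ) := by simp
    _ ≤ μ U + μ Uᶜ := measure_union_le U Uᶜ
    _ ≤ ENNReal.ofReal (#s * δ) + μ A := add_le_add hU (measure_mono hUA)
    _ = μ A + ENNReal.ofReal (#s * δ) := add_comm _ _

lemma Wapprox_self_sq_le {S : Type*} (φ : ℕ → S → ℝ) (lam : ℕ → ℝ) (R : ℕ) (x : S) :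
    Wapprox φ lam R x x ^ 2
      ≤ (∑ r ∈ range R, φ r x ^ 2) * ∑ r ∈ range R, lam r ^ 2 * φ r x ^ 2 := by
  have hcs := sum_mul_sq_le_sq_mul_sq (range R) (fun r => lam r * φ r x) (φ · x)
  simp only [mul_pow] at hcs
  rw [Wapprox, mul_comm]
  exact hcs

lemma sum_Wapprox_self_sq_le {S ι : Type*} [Fintype ι] (φ : ℕ → S → ℝ) (lam : ℕ → ℝ) (R : ℕ)
    (x : ι → S) {C c : ℝ} (hC0 : 0 ≤ C) (hC : ∀ i, ∑ r ∈ range R, φ r (x i) ^ 2 ≤ C)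
    (hc : ∀ r < R, ∑ i, φ r (x i) ^ 2 ≤ c) :
    ∑ i, Wapprox φ lam R (x i) (x i) ^ 2 ≤ C * c * ∑ r ∈ range R, lam r ^ 2 := by
  calc ∑ i, Wapprox φ lam R (x i) (x i) ^ 2
      ≤ ∑ i, C * ∑ r ∈ range R, lam r ^ 2 * φ r (x i) ^ 2 := by
        gcongr with i
        exact (Wapprox_self_sq_le φ lam R (x i)).trans
          (mul_le_mul_of_nonneg_right (hC i) (sum_nonneg fun r _ => by positivity))
    _ = C * ∑ r ∈ range R, lam r ^ 2 * ∑ i, φ r (x i) ^ 2 := by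
        rw [← mul_sum, sum_comm]; simp only [mul_sum]
    _ ≤ C * ∑ r ∈ range R, lam r ^ 2 * c := by
        gcongr with r hr
        exact hc r (mem_range.mp hr)
    _ = C * c * ∑ r ∈ range R, lam r ^ 2 := by rw [← sum_mul]; ring

lemma measure_sum_sq_comp_ge_le {S Ω ι : Type*} [MeasurableSpace S] {σ : Measure S}
    [MeasurableSpace Ω] {μ : Measure Ω} [IsProbabilityMeasure μ] [Fintype ι] {X : ι → Ω → S}
    (hXmeas : ∀ i, Measurable (X i)) (hXindep : iIndepFun X μ)
    (hXlaw : ∀ i, μ.map (X i) = σ) {f : S → ℝ} (hf : Measurable f)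
    (hf1 : ∫ x, f x ^ 2 ∂σ = 1) {a : ℝ} (ha : ∀ x, f x ^ 2 ≤ a) {t : ℝ} (ht : 0 ≤ t) :
    μ {ω | Fintype.card ι * (1 + t) ≤ ∑ i, f (X i ω) ^ 2}
      ≤ ENNReal.ofReal (exp (-(2 * Fintype.card ι * t ^ 2 / a ^ 2))) := by
  have hmean : ∀ i, ∫ ω, f (X i ω) ^ 2 ∂μ = 1 := fun i => by
    rw [← hf1, ← hXlaw i, integral_map (hXmeas i).aemeasurable
      (hf.pow_const 2).aestronglyMeasurable]
  rw [← ofReal_measureReal]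
  refine ENNReal.ofReal_le_ofReal ?_
  simpa using measureReal_sum_ge_le_of_mem_Icc (hXindep.comp _ fun _ => hf.pow_const 2)
    (fun i => (hf.pow_const 2).comp (hXmeas i))
    (fun i => ae_of_all _ fun ω => ⟨sq_nonneg _, ha _⟩) hmean ht

theorem diagonal_term_bound_general
    (S : Type) [MeasurableSpace S] (σm : Measure S) [IsProbabilityMeasure σm]
    (φ : ℕ → S → ℝ) (lam : ℕ → ℝ)
    (hφmeas : ∀ k, Measurable (φ k))
    (hφortho : ∀ k l, ∫ x, φ k x * φ l x ∂σm = if k = l then 1 else 0)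
    (R : ℕ) (hR : 1 ≤ R)
    (ρ a : ℝ) (hρ1 : 1 ≤ ρ)
    (hρ : ∀ x, ∑ r ∈ Finset.range R, (φ r x) ^ 2 ≤ ρ + 1)
    (ha : ∀ r < R, ∀ x, (φ r x) ^ 2 ≤ a)
    (n : ℕ) (hn : 1 ≤ n)
    (Ω : Type) [MeasurableSpace Ω] (μ : Measure Ω) [IsProbabilityMeasure μ]
    (X : Fin n → Ω → S)
    (hXmeas : ∀ i, Measurable (X i))
    (hXindep : iIndepFun X μ)
    (hXlaw : ∀ i, Measure.map (X i) μ = σm)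
    (α : ℝ) (hα : α ∈ Set.Ioo (0 : ℝ) 1) :
    ENNReal.ofReal (1 - α) ≤
      μ {ω | (1 / (n : ℝ) ^ 2) * ∑ i : Fin n, (Wapprox φ lam R (X i ω) (X i ω)) ^ 2
          ≤ (1 + a * Real.sqrt (Real.log (R / α) / (2 * n)))
              * (2 * ρ * (∑ r ∈ Finset.range R, (lam r) ^ 2)) / n} := by
  obtain ⟨hα0, hα1⟩ := hα
  have hn0 : (n : ℝ) ≠ 0 := by positivity
  have hR0 : (R : ℝ) ≠ 0 := by positivity
  have hφsq : ∀ r, ∫ x, φ r x ^ 2 ∂σm = 1 := fun r => by simpa [sq] using hφortho r r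
  have ha0 : 0 < a := one_pos.trans_le (one_le_of_integral_sq_eq_one (hφsq 0) (ha 0 hR))
  have hlog : 0 ≤ Real.log (R / α) :=
    Real.log_nonneg ((one_le_div hα0).mpr (by linarith [(Nat.one_le_cast (α := ℝ)).mpr hR]))
  set t := a * Real.sqrt (Real.log (R / α) / (2 * n))
  have ht : 0 ≤ t := by positivity
  have htail : exp (-(2 * n * t ^ 2 / a ^ 2)) = α / R := by
    rw [mul_pow, Real.sq_sqrt (by positivity), show 2 * n * (a ^ 2 * (Real.log (R / α) / (2 * n)))
      / a ^ 2 = Real.log (R / α) by field_simp, Real.exp_neg, Real.exp_log (by positivity), inv_div]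
  set bad : ℕ → Set Ω := fun r => {ω | n * (1 + t) ≤ ∑ i, φ r (X i ω) ^ 2}
  have hbad : ∀ r ∈ range R, μ (bad r) ≤ ENNReal.ofReal (α / R) := fun r hr => by
    simpa [htail] using measure_sum_sq_comp_ge_le hXmeas hXindep hXlaw (hφmeas r) (hφsq r)
      (ha r (mem_range.mp hr)) ht
  refine le_of_eq_of_le ?_ (ofReal_one_sub_card_mul_le_measure (by positivity) hbad fun ω hω => ?_)
  · rw [card_range, mul_div_cancel₀ _ hR0]
  · have hsum := sum_Wapprox_self_sq_le φ lam R (X · ω) (by linarith) (fun i => hρ _)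
      fun r hr => (not_le.mp (hω r (mem_range.mpr hr))).le
    calc (1 / (n : ℝ) ^ 2) * ∑ i, Wapprox φ lam R (X i ω) (X i ω) ^ 2
        ≤ (1 / (n : ℝ) ^ 2) * ((ρ + 1) * (n * (1 + t)) * ∑ r ∈ range R, lam r ^ 2) := by
          gcongr
      _ = (1 + t) * ((ρ + 1) * ∑ r ∈ range R, lam r ^ 2) / n := by field_simp
      _ ≤ (1 + t) * (2 * ρ * ∑ r ∈ range R, lam r ^ 2) / n := by gcongr; linarith

/-- **Control of the diagonal term.**  Let `(φ_k)` be an orthonormal family in `L²(σ)`,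
`λ* = (λ*_k)` square-summable, `W_R(x,y) = Σ_{r=1}^R λ*_r φ_r(x) φ_r(y)`,
`ρ ≥ ρ(R) = max(1, ‖Σ_{r=1}^R φ_r²‖_∞ − 1)` and `a ≥ max_{1≤r≤R} ‖φ_r²‖_∞`, with
`X₁, …, Xₙ` i.i.d. of law `σ`.  Then with probability at least `1 − α`:
`(1/n²) Σ_{i=1}^n W_R(X_i,X_i)² ≤ (1 + a √(log(R/α)/(2n))) · 2ρ ‖W_R‖²/n`,
where `‖W_R‖² = Σ_{r=1}^R (λ*_r)²`. -/
theorem diagonal_term_bound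
    (S : Type) [MeasurableSpace S] (σm : Measure S) [IsProbabilityMeasure σm]
    (φ : ℕ → S → ℝ) (lam : ℕ → ℝ)
    (hφmeas : ∀ k, Measurable (φ k))
    (hφortho : ∀ k l, ∫ x, φ k x * φ l x ∂σm = if k = l then 1 else 0)
    (hlam : Summable fun k => (lam k) ^ 2)
    (R : ℕ) (hR : 1 ≤ R)
    (ρ a : ℝ) (hρ1 : 1 ≤ ρ)
    (hρ : ∀ x, ∑ r ∈ Finset.range R, (φ r x) ^ 2 ≤ ρ + 1)
    (ha : ∀ r < R, ∀ x, (φ r x) ^ 2 ≤ a)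
    (n : ℕ) (hn : 1 ≤ n)
    (Ω : Type) [MeasurableSpace Ω] (μ : Measure Ω) [IsProbabilityMeasure μ]
    (X : Fin n → Ω → S)
    (hXmeas : ∀ i, Measurable (X i))
    (hXindep : iIndepFun X μ)
    (hXlaw : ∀ i, Measure.map (X i) μ = σm)
    (α : ℝ) (hα : α ∈ Set.Ioo (0 : ℝ) 1) :
    ENNReal.ofReal (1 - α) ≤
      μ {ω | (1 / (n : ℝ) ^ 2) * ∑ i : Fin n, (Wapprox φ lam R (X i ω) (X i ω)) ^ 2
          ≤ (1 + a * Real.sqrt (Real.log (R / α) / (2 * n)))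
              * (2 * ρ * (∑ r ∈ Finset.range R, (lam r) ^ 2)) / n} :=
  diagonal_term_bound_general S σm φ lam hφmeas hφortho R hR ρ a hρ1 hρ ha n hn Ω μ X hXmeas hXindep
    hXlaw α hα

end
end

section
/- Let R ≥ 0 and n be such that R̃ := Σ_{ℓ=0}^R d_ℓ ≤ n. Then there exists a set 𝔥_R of permutations of [n] with cardinality at most (R+2)!, depending only on R (and the block sizes d₀,…,d_R), such that for every nonincreasing tuple of real numbers λ₁ ≥ λ₂ ≥ … ≥ λ_n and every u ∈ 𝓜_R: min over all permutations σ of [n] of [ Σ_{k=1}^{R̃} (u_k − λ_{σ(k)})² + Σ_{k=R̃+1}^{n} λ_{σ(k)}² ] = min over σ ∈ 𝔥_R of the same quantity. -/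
open MeasureTheory ProbabilityTheory Filter
open scoped RealInnerProductSpace

noncomputable section

/-- The ℓ²-rearrangement distance between two square-summable real sequences:
the infimum over finitely supported permutations `π` of `√(Σ_k (x_k − y_{π k})²)`. -/
def delta2 (x y : ℕ → ℝ) : ℝ :=
  ⨅ π : {π : Equiv.Perm ℕ // {i | π i ≠ i}.Finite},
    Real.sqrt (∑' k, (x k - y (π.1 k)) ^ 2)

/-- Extension of a finite tuple by zeros. -/
def extendF {m : ℕ} (v : Fin m → ℝ) : ℕ → ℝ :=
  fun k => if h : k < m then v ⟨k, h⟩ else 0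

/-- Eigenvalues (with multiplicity) of a real symmetric matrix (junk value `0`
if the matrix is not symmetric). -/
def eigs {n : ℕ} (M : Matrix (Fin n) (Fin n) ℝ) : Fin n → ℝ :=
  if h : M.IsHermitian then h.eigenvalues else 0

/-- Dimension `d_ℓ` of the space of real spherical harmonics of degree `ℓ` on `𝕊^{d−1}`. -/
def dDim (d ℓ : ℕ) : ℕ :=
  if ℓ = 0 then 1 else if ℓ = 1 then d
  else Nat.choose (ℓ + d - 1) ℓ - Nat.choose (ℓ + d - 3) (ℓ - 2)

/-- `R̃ = Σ_{ℓ=0}^R d_ℓ`. -/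
def Rtilde (d R : ℕ) : ℕ := ∑ ℓ ∈ Finset.range (R + 1), dDim d ℓ

/-- The degree (level) of the `k`-th coordinate (0-indexed) of the sequence in which the
degree-`ℓ` coefficient is repeated `d_ℓ` times. -/
def levelOf (d k : ℕ) : ℕ := sInf {ℓ : ℕ | k < Rtilde d ℓ}

/-- The spectrum `λ*` of the integral operator: each `p*_ℓ` repeated with multiplicity `d_ℓ`. -/
def lamStarSeq (d : ℕ) (p : ℕ → ℝ) : ℕ → ℝ := fun k => p (levelOf d k)

/-- The `R̃`-tuple `λ^{*R} = (p*₀ repeated d₀ times, …, p*_R repeated d_R times)`. -/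
def lamStarR (d R : ℕ) (p : ℕ → ℝ) : Fin (Rtilde d R) → ℝ :=
  fun k => p (levelOf d (k : ℕ))

/-- Membership in `𝓜_R`: tuples of `ℝ^{R̃}` that are constant on each block of size `d_ℓ`. -/
def IsBlock (d R : ℕ) (u : Fin (Rtilde d R) → ℝ) : Prop :=
  ∃ c : ℕ → ℝ, ∀ k : Fin (Rtilde d R), u k = c (levelOf d (k : ℕ))

/-- Padding a tuple of length `m` by zeros to a tuple of length `n`. -/
def pad {m : ℕ} (n : ℕ) (v : Fin m → ℝ) : Fin n → ℝ :=
  fun k => if h : (k : ℕ) < m then v ⟨(k : ℕ), h⟩ else 0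

/-- The least-squares objective
`Σ_{k=1}^{R̃} (u_k − λ_{σ(k)})² + Σ_{k=R̃+1}^n λ_{σ(k)}²`. -/
def objective {m n : ℕ} (v : Fin m → ℝ) (lam : Fin n → ℝ) (σ : Equiv.Perm (Fin n)) : ℝ :=
  ∑ k : Fin n, (pad n v k - lam (σ k)) ^ 2

/-
A least-squares matching `Σ_k (a_k − λ_{σ k})²` is minimised, by the rearrangement inequality,
by any `σ` that lists `λ` in the same order as `a`. Here `a = pad n u` takes only `R + 2` values:
one on each of the blocks `0, …, R` of `u ∈ 𝓜_R` and `0` on the tail. Once the blocks are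
ranked by their values, sorting the coordinates by the rank of their block is such a `σ`, and
there are at most `(R + 2)!` rankings.
-/

theorem ciInf_eq_ciInf_subtype_of_forall_le {ι α : Type*} [ConditionallyCompleteLattice α]
    {f : ι → α} {p : ι → Prop} {i₀ : ι} (hp : p i₀) (hmin : ∀ i, f i₀ ≤ f i) :
    ⨅ i, f i = ⨅ i : Subtype p, f i := by
  have : Nonempty ι := ⟨i₀⟩
  have : Nonempty (Subtype p) := ⟨⟨i₀, hp⟩⟩
  rw [IsGLB.ciInf_eq (IsLeast.isGLB ⟨⟨i₀, rfl⟩, by rintro _ ⟨i, rfl⟩; exact hmin i⟩),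
    IsGLB.ciInf_eq (IsLeast.isGLB ⟨⟨⟨i₀, hp⟩, rfl⟩, by rintro _ ⟨i, rfl⟩; exact hmin i⟩)]

theorem Monovary.sum_sub_sq_le_sum_sub_comp_perm_sq {ι α : Type*} [Fintype ι] [CommRing α]
    [LinearOrder α] [IsStrictOrderedRing α] {f g : ι → α} (hfg : Monovary f g)
    (σ : Equiv.Perm ι) :
    ∑ i, (f i - g i) ^ 2 ≤ ∑ i, (f i - g (σ i)) ^ 2 := by
  have expand : ∀ h : ι → α, ∑ i, (f i - h i) ^ 2
      = ∑ i, f i ^ 2 + ∑ i, h i ^ 2 - 2 * ∑ i, f i * h i := by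
    intro h
    simp only [Finset.mul_sum, ← Finset.sum_add_distrib, ← Finset.sum_sub_distrib]
    exact Finset.sum_congr rfl fun i _ => by ring
  have hperm := expand (g ∘ σ)
  have hsq : ∑ i, g (σ i) ^ 2 = ∑ i, g i ^ 2 := Equiv.sum_comp σ (g · ^ 2)
  have hre := hfg.sum_mul_comp_perm_le_sum_mul (σ := σ)
  simp only [Function.comp_apply] at hperm
  linarith [expand g]

theorem exists_perm_antitone_comp {m : ℕ} {α : Type*} [LinearOrder α] (c : Fin m → α) :
    ∃ τ : Equiv.Perm (Fin m), Antitone (c ∘ τ) :=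
  ⟨Tuple.sort (OrderDual.toDual ∘ c), monotone_toDual_comp_iff.1 (Tuple.monotone_sort _)⟩

theorem antitone_comp_sort_symm_comp {n m : ℕ} {α : Type*} [Preorder α] {c : Fin m → α}
    {τ : Equiv.Perm (Fin m)} (hc : Antitone (c ∘ τ)) (g : Fin n → Fin m) :
    Antitone ((c ∘ g) ∘ Tuple.sort (τ.symm ∘ g)) := by
  have hcg : c ∘ g = (c ∘ τ) ∘ (τ.symm ∘ g) := by ext; simp
  rw [hcg]
  exact hc.comp_monotone (Tuple.monotone_sort (τ.symm ∘ g))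

theorem monovary_comp_perm_symm {ι α β : Type*} [LinearOrder ι] [Preorder α] [Preorder β]
    {f : ι → α} {g : ι → β} {π : Equiv.Perm ι} (hf : Antitone (f ∘ π)) (hg : Antitone g) :
    Monovary f (g ∘ π.symm) := by
  simpa [Function.comp_def] using (hf.monovary hg).comp_right π.symm

theorem objective_le_objective_of_monovary {m n : ℕ} {v : Fin m → ℝ} {lam : Fin n → ℝ}
    {σ₀ : Equiv.Perm (Fin n)} (h : Monovary (pad n v) (lam ∘ σ₀)) (σ : Equiv.Perm (Fin n)) :
    objective v lam σ₀ ≤ objective v lam σ := by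
  simpa [objective] using h.sum_sub_sq_le_sum_sub_comp_perm_sq (σ₀⁻¹ * σ)

/-- Coordinate `k` of `ℝⁿ` lies in block `levelOf d k` when `k < R̃`, and in the zero tail,
labelled `R + 1`, otherwise. -/
def blockIndex (d R n : ℕ) (k : Fin n) : Fin (R + 2) :=
  if h : (k : ℕ) < Rtilde d R then
    Fin.castSucc ⟨levelOf d k, Nat.lt_succ_of_le (Nat.sInf_le h)⟩
  else Fin.last (R + 1)

def blockSortPerm (d R n : ℕ) (τ : Equiv.Perm (Fin (R + 2))) : Equiv.Perm (Fin n) :=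
  (Tuple.sort (τ.symm ∘ blockIndex d R n))⁻¹

theorem IsBlock.exists_pad_eq_comp_blockIndex {d R : ℕ} {u : Fin (Rtilde d R) → ℝ}
    (hu : IsBlock d R u) (n : ℕ) :
    ∃ c : Fin (R + 2) → ℝ, pad n u = c ∘ blockIndex d R n := by
  obtain ⟨c, hc⟩ := hu
  refine ⟨Fin.lastCases 0 fun ℓ => c ℓ, funext fun k => ?_⟩
  by_cases h : (k : ℕ) < Rtilde d R
  · simp [pad, blockIndex, h, hc, -Fin.castSucc_mk]
  · simp [pad, blockIndex, h]

theorem leastSquares_complexity_general (d : ℕ) (R n : ℕ) :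
    ∃ H : Finset (Equiv.Perm (Fin n)), H.Nonempty ∧
      H.card ≤ Nat.factorial (R + 2) ∧
      ∀ lam : Fin n → ℝ, Antitone lam →
      ∀ u : Fin (Rtilde d R) → ℝ, IsBlock d R u →
        (⨅ σ : Equiv.Perm (Fin n), objective u lam σ)
          = ⨅ σ : H, objective u lam (σ : Equiv.Perm (Fin n)) := by
  refine ⟨Finset.univ.image (blockSortPerm d R n), Finset.univ_nonempty.image _, ?_, ?_⟩
  · calc _ ≤ (Finset.univ : Finset (Equiv.Perm (Fin (R + 2)))).card := Finset.card_image_le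
      _ = Nat.factorial (R + 2) := by simp [Fintype.card_perm]
  intro lam hlam u hu
  obtain ⟨c, hc⟩ := hu.exists_pad_eq_comp_blockIndex n
  obtain ⟨τ, hτ⟩ := exists_perm_antitone_comp c
  have hmono : Monovary (pad n u) (lam ∘ blockSortPerm d R n τ) :=
    hc ▸ monovary_comp_perm_symm (antitone_comp_sort_symm_comp hτ _) hlam
  exact ciInf_eq_ciInf_subtype_of_forall_le (Finset.mem_image_of_mem _ (Finset.mem_univ τ))
    (objective_le_objective_of_monovary hmono)

/-- **Computational complexity of the least-squares step (Theorem 3.4).**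
Let `d ≥ 3` and `R̃ = Σ_{ℓ=0}^R d_ℓ ≤ n`.  There is a nonempty set `𝔥_R` of
permutations of `[n]`, of cardinality at most `(R+2)!` and depending only on `R`
(and the block sizes `d₀, …, d_R`), such that for every nonincreasing tuple
`λ₁ ≥ … ≥ λ_n` and every `u ∈ 𝓜_R`, the minimum over all permutations `σ` of
`Σ_{k=1}^{R̃} (u_k − λ_{σ(k)})² + Σ_{k=R̃+1}^n λ_{σ(k)}²` equals the minimum of the
same quantity over `σ ∈ 𝔥_R`. -/
theorem leastSquares_complexity (d : ℕ) (hd : 3 ≤ d) (R n : ℕ)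
    (hn : Rtilde d R ≤ n) :
    ∃ H : Finset (Equiv.Perm (Fin n)), H.Nonempty ∧
      H.card ≤ Nat.factorial (R + 2) ∧
      ∀ lam : Fin n → ℝ, Antitone lam →
      ∀ u : Fin (Rtilde d R) → ℝ, IsBlock d R u →
        (⨅ σ : Equiv.Perm (Fin n), objective u lam σ)
          = ⨅ σ : H, objective u lam (σ : Equiv.Perm (Fin n)) :=
  leastSquares_complexity_general d R n

end
end
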